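/- Consider the dimaze given by the half-grid: the digraph D on vertices {(x, y) ∈ ℤ² : y > 0 and y ≥ x ≥ 0} with grid edges directed upwards and leftwards, and exits B_0 = {(0, y) : y > 0}. Then the diagonal set I = {(x, x) : x > 0} is linkable onto a subset J of B_0 if and only if J is infinite; consequently I has no maximal linkable superset inside I ∪ B_0, and M_L(D, B_0) is not a matroid. -/

import Mathlib

/-!
For `m ≤ y`, the hook from `(m+1, m+1)` up to `(m+1, y+1)` and then left to the exit
`(0, y+1)` is a path, and hooks with `m < m'`, `y < y'` are disjoint. So the diagonal links onto
any infinite set of exits, taking the `m`-th diagonal vertex to the `m`-th exit. Conversely,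
disjoint paths from infinitely many starts have infinitely many ends.

If `M` with `I ⊆ M ⊆ I ∪ B₀` is linkable, the paths from `I` end in infinitely many exits outside
`M`. Re-linking `I` onto all of these but one exit `b`, and adding trivial paths at the exits of
`M` and at `b`, links `M ∪ {b}`; so no linkable set is maximal between `I` and `I ∪ B₀`,
contradicting (IM).
-/

open Set

universe u

variable {V : Type*}

/-- A directed path in the digraph `D`: a nonempty duplicate-free list of vertices
with an edge between consecutive vertices. -/
structure DiPath {V : Type*} (D : V → V → Prop) where
  verts : List V
  ne : verts ≠ []
  nodup : verts.Nodup
  chain : verts.Chain' D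

namespace DiPath

variable {D : V → V → Prop}

/-- The initial vertex of a directed path. -/
def first (p : DiPath D) : V := p.verts.head p.ne

/-- The terminal vertex of a directed path. -/
def last (p : DiPath D) : V := p.verts.getLast p.ne

/-- The set of vertices of a directed path. -/
def vertSet (p : DiPath D) : Set V := {v | v ∈ p.verts}

/-- The set of (directed) edges of a directed path. -/
def edgeSet (p : DiPath D) : Set (V × V) := {e | e ∈ p.verts.zip p.verts.tail}

end DiPath

/-- The set of initial vertices of a collection of paths. -/
def Ini {D : V → V → Prop} (P : Set (DiPath D)) : Set V := {v | ∃ p ∈ P, p.first = v}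

/-- The set of terminal vertices of a collection of paths. -/
def Ter {D : V → V → Prop} (P : Set (DiPath D)) : Set V := {v | ∃ p ∈ P, p.last = v}

/-- All vertices used by a collection of paths. -/
def LinkVerts {D : V → V → Prop} (P : Set (DiPath D)) : Set V := ⋃ p ∈ P, p.vertSet

/-- All edges used by a collection of paths. -/
def LinkEdges {D : V → V → Prop} (P : Set (DiPath D)) : Set (V × V) := ⋃ p ∈ P, p.edgeSet

/-- A linkage in the dimaze `(D, B0)`: a set of pairwise vertex-disjoint directed
paths, each ending in `B0`. -/
def IsLinkage (D : V → V → Prop) (B0 : Set V) (P : Set (DiPath D)) : Prop :=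
  (∀ p ∈ P, p.last ∈ B0) ∧
  (∀ p ∈ P, ∀ q ∈ P, p ≠ q → Disjoint p.vertSet q.vertSet)

/-- `(D, B0)` is a dimaze: every vertex of `B0` has out-degree `0`. -/
def IsDimaze (D : V → V → Prop) (B0 : Set V) : Prop := ∀ b ∈ B0, ∀ v, ¬ D b v

/-- A set of vertices is linkable if it is the set of initial vertices of a linkage. -/
def Linkable (D : V → V → Prop) (B0 : Set V) (I : Set V) : Prop :=
  ∃ P, IsLinkage D B0 P ∧ Ini P = I

/-- A set of vertices is linkable onto `B0` if it is the set of initial vertices of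
a linkage whose terminal vertices are all of `B0`. -/
def LinkableOnto (D : V → V → Prop) (B0 : Set V) (I : Set V) : Prop :=
  ∃ P, IsLinkage D B0 P ∧ Ini P = I ∧ Ter P = B0

/-- `I` is a maximal element (w.r.t. inclusion) of the set system `Ind`. -/
def MaximalIn {α : Type*} (Ind : Set α → Prop) (I : Set α) : Prop :=
  Ind I ∧ ∀ J, Ind J → I ⊆ J → J = I

/-- The maximality axiom (IM). -/
def SatisfiesIM {α : Type*} (Ind : Set α → Prop) : Prop :=
  ∀ I X : Set α, Ind I → I ⊆ X →
    ∃ J, Ind J ∧ I ⊆ J ∧ J ⊆ X ∧ ∀ K, Ind K → K ⊆ X → J ⊆ K → K = J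

/-- `Ind` is the collection of independent sets of a matroid:
axioms (I1), (I2), (I3) and (IM). -/
def IsMatroidIndep {α : Type*} (Ind : Set α → Prop) : Prop :=
  Ind ∅ ∧
  (∀ I J : Set α, I ⊆ J → Ind J → Ind I) ∧
  (∀ I B : Set α, Ind I → ¬ MaximalIn Ind I → MaximalIn Ind B →
    ∃ x ∈ B \ I, Ind (insert x I)) ∧
  SatisfiesIM Ind

/-- The dimaze `(D, B0)` contains an alternating comb: there is an alternating ray
(given by the injective vertex sequence `f` and edge orientations `o`, with
infinitely many vertices of in-degree 2) together with a linkage of all its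
in-degree-2 vertices and its first vertex onto a set of exits contained in `B0`,
by disjoint paths meeting the ray exactly at their initial vertices. -/
def ContainsAltComb (D : V → V → Prop) (B0 : Set V) : Prop :=
  ∃ (f : ℕ → V) (o : ℕ → Bool) (P : Set (DiPath D)),
    Function.Injective f ∧
    (∀ n, if o n then D (f n) (f (n+1)) else D (f (n+1)) (f n)) ∧
    (∀ N, ∃ k ≥ N, o k = true ∧ o (k+1) = false) ∧
    IsLinkage D B0 P ∧
    Ini P = insert (f 0) {v | ∃ k, o k = true ∧ o (k+1) = false ∧ v = f (k+1)} ∧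
    (∀ p ∈ P, ∀ v ∈ p.vertSet, v ∈ Set.range f → v = p.first)
/-- The vertex set of the half-grid: `{(x, y) ∈ ℤ² : y > 0 and y ≥ x ≥ 0}`. -/
abbrev HalfGridV := {p : ℤ × ℤ // 0 < p.2 ∧ p.1 ≤ p.2 ∧ 0 ≤ p.1}

/-- Edges of the half-grid, directed upwards and leftwards (with the outgoing
edges of the exits, the column `x = 0`, removed). -/
def halfGridAdj (a b : HalfGridV) : Prop :=
  0 < a.1.1 ∧ (b.1 = (a.1.1, a.1.2 + 1) ∨ b.1 = (a.1.1 - 1, a.1.2))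

/-- The exits of the half-grid: the column `x = 0`. -/
def halfGridB0 : Set HalfGridV := {p | p.1.1 = 0}

/-- The diagonal `{(x, x) : x > 0}`. -/
def halfGridDiag : Set HalfGridV := {p | p.1.1 = p.1.2 ∧ 0 < p.1.1}

namespace DiPath

variable {D : V → V → Prop}

theorem first_mem_vertSet (p : DiPath D) : p.first ∈ p.vertSet := List.head_mem p.ne

theorem last_mem_vertSet (p : DiPath D) : p.last ∈ p.vertSet := List.getLast_mem p.ne

def single (v : V) : DiPath D :=
  ⟨[v], List.cons_ne_nil v [], List.nodup_singleton v, List.isChain_singleton v⟩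

@[simp]
theorem first_single (v : V) : (single v : DiPath D).first = v := rfl

@[simp]
theorem vertSet_single (v : V) : (single v : DiPath D).vertSet = {v} := by
  ext; simp [single, vertSet]

theorem eq_last_of_mem_of_isDimaze {B0 : Set V} (hD : IsDimaze D B0) (p : DiPath D)
    {v : V} (hv : v ∈ p.vertSet) (hB : v ∈ B0) : v = p.last := by
  obtain ⟨i, hi, rfl⟩ := List.getElem_of_mem hv
  rcases Nat.lt_or_ge (i + 1) p.verts.length with h | h
  · exact absurd (p.chain.getElem i h) (hD _ hB _)
  · simp only [last, List.getLast_eq_getElem]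
    congr
    omega

end DiPath

theorem ini_eq_image {D : V → V → Prop} (P : Set (DiPath D)) : Ini P = DiPath.first '' P := rfl

theorem ter_eq_image {D : V → V → Prop} (P : Set (DiPath D)) : Ter P = DiPath.last '' P := rfl

namespace IsLinkage

variable {D : V → V → Prop} {B0 : Set V} {P : Set (DiPath D)}

theorem ter_subset (hP : IsLinkage D B0 P) : Ter P ⊆ B0 := by
  rintro _ ⟨p, hp, rfl⟩
  exact hP.1 p hp

theorem eq_of_mem_vertSet (hP : IsLinkage D B0 P) {p q : DiPath D} (hp : p ∈ P) (hq : q ∈ P)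
    {v : V} (hvp : v ∈ p.vertSet) (hvq : v ∈ q.vertSet) : p = q :=
  by_contra fun hne => Set.disjoint_left.1 (hP.2 p hp q hq hne) hvp hvq

theorem injOn_first (hP : IsLinkage D B0 P) : Set.InjOn DiPath.first P := fun p hp q hq h =>
  hP.eq_of_mem_vertSet hp hq p.first_mem_vertSet (h ▸ q.first_mem_vertSet)

theorem injOn_last (hP : IsLinkage D B0 P) : Set.InjOn DiPath.last P := fun p hp q hq h =>
  hP.eq_of_mem_vertSet hp hq p.last_mem_vertSet (h ▸ q.last_mem_vertSet)

theorem ini_infinite_iff_ter_infinite (hP : IsLinkage D B0 P) :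
    (Ini P).Infinite ↔ (Ter P).Infinite := by
  rw [ini_eq_image, ter_eq_image, Set.infinite_image_iff hP.injOn_first,
    Set.infinite_image_iff hP.injOn_last]

/-- If the terminal vertex of `p` were the initial vertex of some `q` in the linkage, then
`q = p` by disjointness, and `p` would start at an exit. -/
theorem infinite_ter_diff_ini (hP : IsLinkage D B0 P) (h : (Ini P \ B0).Infinite) :
    (Ter P \ Ini P).Infinite := by
  set Q := {p ∈ P | p.first ∉ B0}
  have hQ : (DiPath.first '' Q).Infinite := by
    convert h using 1
    ext v
    simp only [Q, ini_eq_image, Set.mem_image, Set.mem_sdiff, Set.mem_sep_iff]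
    grind
  refine ((Set.infinite_image_iff (hP.injOn_last.mono (Set.sep_subset _ _))).2
    (hQ.of_image _)).mono ?_
  rintro _ ⟨p, ⟨hp, hpB⟩, rfl⟩
  refine ⟨⟨p, hp, rfl⟩, ?_⟩
  rintro ⟨q, hq, hqp⟩
  obtain rfl := hP.eq_of_mem_vertSet hp hq p.last_mem_vertSet (hqp ▸ q.first_mem_vertSet)
  exact hpB (hqp ▸ hP.1 p hp)

theorem union_image_single (hD : IsDimaze D B0) (hP : IsLinkage D B0 P) {C : Set V}
    (hC : C ⊆ B0) (hCP : Disjoint C (Ter P)) : IsLinkage D B0 (P ∪ DiPath.single '' C) := by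
  have hdisj : ∀ p ∈ P, ∀ c ∈ C, Disjoint p.vertSet (DiPath.single c : DiPath D).vertSet := by
    intro p hp c hc
    rw [DiPath.vertSet_single, Set.disjoint_singleton_right]
    intro hcp
    exact Set.disjoint_left.1 hCP hc ⟨p, hp, (p.eq_last_of_mem_of_isDimaze hD hcp (hC hc)).symm⟩
  refine ⟨?_, ?_⟩
  · rintro p (hp | ⟨c, hc, rfl⟩)
    exacts [hP.1 p hp, hC hc]
  · rintro p (hp | ⟨c, hc, rfl⟩) q (hq | ⟨c', hc', rfl⟩) hne
    · exact hP.2 p hp q hq hne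
    · exact hdisj p hp c' hc'
    · exact (hdisj q hq c hc).symm
    · simpa using fun h => hne (congrArg DiPath.single h)

end IsLinkage

theorem ini_union_image_single {D : V → V → Prop} (P : Set (DiPath D)) (C : Set V) :
    Ini (P ∪ DiPath.single '' C) = Ini P ∪ C := by
  simp [ini_eq_image, Set.image_union, Set.image_image]

theorem not_exists_maximal_linkable {D : V → V → Prop} {B0 I : Set V} (hD : IsDimaze D B0)
    (hIB : Disjoint I B0) (hI : I.Infinite)
    (hlink : ∀ J ⊆ B0, J.Infinite → ∃ P, IsLinkage D B0 P ∧ Ini P = I ∧ Ter P = J) :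
    ¬ ∃ M, I ⊆ M ∧ M ⊆ I ∪ B0 ∧ Linkable D B0 M ∧
      ∀ K, Linkable D B0 K → K ⊆ I ∪ B0 → M ⊆ K → K = M := by
  rintro ⟨_, hIM, hMI, ⟨P, hP, rfl⟩, hmax⟩
  have hfree : (Ter P \ Ini P).Infinite :=
    hP.infinite_ter_diff_ini (hI.mono fun v hv => ⟨hIM hv, Set.disjoint_left.1 hIB hv⟩)
  obtain ⟨b, hb⟩ := hfree.nonempty
  obtain ⟨Q, hQ, hQI, hQJ⟩ :=
    hlink _ (Set.sdiff_subset.trans (Set.sdiff_subset.trans hP.ter_subset))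
      (hfree.sdiff (Set.finite_singleton b))
  -- Re-link `I` avoiding `b` and the exits already in `Ini P`, which become trivial paths.
  set C := (Ini P \ I) ∪ {b}
  have hCB : C ⊆ B0 := by
    rintro v (⟨hvM, hvI⟩ | rfl)
    · exact (hMI hvM).resolve_left hvI
    · exact hP.ter_subset hb.1
  have hCQ : Disjoint C (Ter Q) := by
    rw [hQJ, Set.disjoint_left]
    rintro v (⟨hvM, -⟩ | rfl) hv
    exacts [hv.1.2 hvM, hv.2 rfl]
  have hlinkable : Linkable D B0 (Ini P ∪ {b}) := by
    refine ⟨_, hQ.union_image_single hD hCB hCQ, ?_⟩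
    rw [ini_union_image_single, hQI, ← Set.union_assoc, Set.union_sdiff_cancel hIM]
  have hsub : Ini P ∪ {b} ⊆ I ∪ B0 :=
    Set.union_subset hMI (Set.singleton_subset_iff.2 (Or.inr (hP.ter_subset hb.1)))
  exact hb.2 (hmax _ hlinkable hsub Set.subset_union_left ▸ Set.mem_union_right _ rfl)

theorem not_isMatroidIndep_of_not_exists_maximal {α : Type*} {Ind : Set α → Prop} {I X : Set α}
    (hI : Ind I) (hIX : I ⊆ X)
    (h : ¬ ∃ M, I ⊆ M ∧ M ⊆ X ∧ Ind M ∧ ∀ K, Ind K → K ⊆ X → M ⊆ K → K = M) :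
    ¬ IsMatroidIndep Ind := by
  rintro ⟨-, -, -, hIM⟩
  obtain ⟨M, hM, hIM, hMX, hmax⟩ := hIM I X hI hIX
  exact h ⟨M, hIM, hMX, hM, hmax⟩

namespace HalfGrid

def exit (n : ℕ) : HalfGridV := ⟨(0, n + 1), by omega, by omega, le_rfl⟩

def diag (k : ℕ) : HalfGridV := ⟨(k + 1, k + 1), by omega, le_rfl, by omega⟩

theorem exit_injective : Function.Injective exit := fun a b h => by
  simpa [exit, Subtype.ext_iff] using h

theorem diag_injective : Function.Injective diag := fun a b h => by
  simpa [diag, Subtype.ext_iff] using h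

theorem range_exit : Set.range exit = halfGridB0 := by
  ext ⟨⟨x, y⟩, hy, hxy, hx⟩
  simp only [Set.mem_range, exit, halfGridB0, Set.mem_ofPred_eq, Subtype.ext_iff, Prod.ext_iff]
  exact ⟨fun ⟨n, h0, _⟩ => h0.symm, fun h => ⟨(y - 1).toNat, h.symm, by omega⟩⟩

theorem range_diag : Set.range diag = halfGridDiag := by
  ext ⟨⟨x, y⟩, hy, hxy, hx⟩
  simp only [Set.mem_range, diag, halfGridDiag, Set.mem_ofPred_eq, Subtype.ext_iff, Prod.ext_iff]
  exact ⟨fun ⟨k, hkx, hky⟩ => by omega, fun h => ⟨(x - 1).toNat, by omega, by omega⟩⟩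

theorem B0_infinite : halfGridB0.Infinite :=
  range_exit ▸ Set.infinite_range_of_injective exit_injective

theorem diag_infinite : halfGridDiag.Infinite :=
  range_diag ▸ Set.infinite_range_of_injective diag_injective

theorem disjoint_diag_B0 : Disjoint halfGridDiag halfGridB0 :=
  Set.disjoint_left.2 fun _ hd hb => hd.2.ne' hb

theorem isDimaze : IsDimaze halfGridAdj halfGridB0 := fun _ hb _ h => h.1.ne' hb

/-- The `i`-th vertex of the hook from `(m+1, m+1)` up to `(m+1, y+1)` and then left to
`(0, y+1)`; for `m ≤ y` the corner is reached at `i = y - m` and the exit at `i = y + 1`. -/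
def hookVert (m y i : ℕ) : HalfGridV :=
  ⟨((min (m + 1) (y + 1 - i) : ℕ), (min (m + 1 + i) (y + 1) : ℕ)), by omega, by omega, by omega⟩

def hook (m y : ℕ) : DiPath halfGridAdj where
  verts := (List.range (y + 2)).map (hookVert m y)
  ne := by simp
  nodup := by
    refine List.Nodup.map_on (fun i hi j hj h => ?_) List.nodup_range
    simp only [List.mem_range] at hi hj
    simp only [hookVert, Subtype.ext_iff, Prod.ext_iff] at h
    omega
  chain := by
    show List.IsChain _ _
    rw [List.isChain_map, List.isChain_range_succ]
    intro i hi
    refine ⟨by simp [hookVert]; omega, ?_⟩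
    simp only [hookVert, Prod.ext_iff]
    omega

theorem hook_first {m y : ℕ} (h : m ≤ y) : (hook m y).first = diag m := by
  simp only [DiPath.first, hook, List.head_map, List.head_range]
  ext <;> simp [hookVert, diag] <;> omega

theorem hook_last (m y : ℕ) : (hook m y).last = exit y := by
  simp only [DiPath.last, hook, List.getLast_map, List.getLast_range]
  ext <;> simp [hookVert, exit]

theorem mem_hook {m y : ℕ} {v : HalfGridV} (hv : v ∈ (hook m y).vertSet) :
    v.1.1 ≤ m + 1 ∧ v.1.2 ≤ y + 1 ∧ (v.1.1 = m + 1 ∨ v.1.2 = y + 1) := by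
  obtain ⟨i, -, rfl⟩ := List.mem_map.1 hv
  simp only [hookVert]
  omega

/-- A vertex shared by the two hooks would lie left of column `m'+1`, hence on row `y'+1`,
which is above the whole first hook. -/
theorem disjoint_hook {m y m' y' : ℕ} (hm : m < m') (hy : y < y') :
    Disjoint (hook m y).vertSet (hook m' y').vertSet :=
  Set.disjoint_left.2 fun _ hv hv' => by
    have := mem_hook hv
    have := mem_hook hv'
    omega

theorem isLinkage_hooks {Y : ℕ → ℕ} (hY : StrictMono Y) :
    IsLinkage halfGridAdj halfGridB0 (Set.range fun m => hook m (Y m)) := by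
  refine ⟨?_, ?_⟩
  · rintro _ ⟨m, rfl⟩
    rw [hook_last, ← range_exit]
    exact Set.mem_range_self _
  · rintro _ ⟨m, rfl⟩ _ ⟨m', rfl⟩ hne
    rcases lt_trichotomy m m' with h | rfl | h
    · exact disjoint_hook h (hY h)
    · exact absurd rfl hne
    · exact (disjoint_hook h (hY h)).symm

/-- Join the `m`-th diagonal vertex to the `m`-th exit of `J`, listed increasingly. -/
theorem exists_linkage_diag_onto {J : Set HalfGridV} (hJB : J ⊆ halfGridB0) (hJ : J.Infinite) :
    ∃ P, IsLinkage halfGridAdj halfGridB0 P ∧ Ini P = halfGridDiag ∧ Ter P = J := by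
  have hJS : exit '' (exit ⁻¹' J) = J := Set.image_preimage_eq_of_subset (range_exit ▸ hJB)
  have hS : (exit ⁻¹' J).Infinite := fun hfin => hJ (hJS ▸ hfin.image exit)
  set Y := Nat.nth (· ∈ exit ⁻¹' J)
  have hY : StrictMono Y := Nat.nth_strictMono hS
  refine ⟨_, isLinkage_hooks hY, ?_, ?_⟩
  · rw [ini_eq_image, ← Set.range_comp, ← range_diag]
    exact congrArg Set.range (funext fun m => hook_first hY.le_apply)
  · rw [ter_eq_image, ← Set.range_comp, ← hJS,
    show exit ⁻¹' J = Set.range Y from (Nat.range_nth_of_infinite hS).symm, ← Set.range_comp]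
    exact congrArg Set.range (funext fun m => hook_last m (Y m))

end HalfGrid

/-- In the half-grid, the diagonal is linkable onto `J ⊆ B0` iff `J` is infinite;
consequently the diagonal has no maximal linkable superset inside `I ∪ B0`, and the
linkability system is not a matroid. -/
theorem halfGrid_not_matroid :
    (∀ J ⊆ halfGridB0,
      ((∃ P, IsLinkage halfGridAdj halfGridB0 P ∧ Ini P = halfGridDiag ∧ Ter P = J) ↔
        J.Infinite)) ∧
    (¬ ∃ M : Set HalfGridV, halfGridDiag ⊆ M ∧ M ⊆ halfGridDiag ∪ halfGridB0 ∧
      Linkable halfGridAdj halfGridB0 M ∧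
      ∀ K, Linkable halfGridAdj halfGridB0 K → K ⊆ halfGridDiag ∪ halfGridB0 →
        M ⊆ K → K = M) ∧
    ¬ IsMatroidIndep (Linkable halfGridAdj halfGridB0) := by
  have hnomax := not_exists_maximal_linkable HalfGrid.isDimaze HalfGrid.disjoint_diag_B0
    HalfGrid.diag_infinite fun _ => HalfGrid.exists_linkage_diag_onto
  refine ⟨fun J hJ => ⟨?_, HalfGrid.exists_linkage_diag_onto hJ⟩, hnomax, ?_⟩
  · rintro ⟨P, hP, hI, rfl⟩
    exact hP.ini_infinite_iff_ter_infinite.1 (hI ▸ HalfGrid.diag_infinite)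
  · obtain ⟨P, hP, hI, -⟩ := HalfGrid.exists_linkage_diag_onto subset_rfl HalfGrid.B0_infinite
    exact not_isMatroidIndep_of_not_exists_maximal ⟨P, hP, hI⟩ Set.subset_union_left hnomax
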